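/- arXiv:2408.02606 — 2 statements merged into one kernel-verified Lean document; each statement's English description precedes it below -/
import Mathlib

section
/- In the exponential example, a set X ⊆ {1,…,n} is a weak PAXp (for δ = 1, class True, point v) if and only if |X ∩ {1,…,2m}| ≥ m. -/
open Finset

/-- The feature space of the exponential example with `n = 2m+1` features: the first
`2m` features have domain `{0,1}` and the last feature has domain `{0,1,n}`, encoded
as functions into `Fin 3` (with the value `2` of the last feature encoding `n`)
whose first `2m` coordinates are `< 2`. -/
abbrev ExpF (m : ℕ) :=
  {x : Fin (2 * m + 1) → Fin 3 // ∀ i : Fin (2 * m + 1), (i : ℕ) < 2 * m → (x i : ℕ) < 2}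

/-- The classifier of the exponential example: `x` is classified `true` iff at least `m`
of its first `2m` features have value `1` (i.e. the goal is reachable in one step). -/
def expκ (m : ℕ) (x : ExpF m) : Bool :=
  decide (m ≤ (Finset.univ.filter
    (fun i : Fin (2 * m + 1) => (i : ℕ) < 2 * m ∧ x.1 i = 1)).card)

/-- The specific point `v = (1,…,1,0)` of the exponential example. -/
def expv (m : ℕ) : ExpF m :=
  ⟨fun i => if (i : ℕ) < 2 * m then 1 else 0, by
    intro i h
    simp only [if_pos h]
    decide⟩

/-- `Prop(X)` in the exponential example: the proportion, among points agreeing with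
`v` on `X`, of points classified `true`. -/
noncomputable def expProp (m : ℕ) (X : Finset (Fin (2 * m + 1))) : ℝ :=
  ((Finset.univ.filter
      (fun x : ExpF m => (∀ i ∈ X, x.1 i = (expv m).1 i) ∧ expκ m x = true)).card : ℝ) /
  ((Finset.univ.filter (fun x : ExpF m => ∀ i ∈ X, x.1 i = (expv m).1 i)).card : ℝ)

/-- `X` is a weak PAXp (for threshold `δ = 1`, class `true`, point `v`) in the
exponential example. -/
def ExpIsWeakPAXp (m : ℕ) (X : Finset (Fin (2 * m + 1))) : Prop :=
  1 ≤ expProp m X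

/-- `X` is a PAXp (subset-minimal weak PAXp) in the exponential example. -/
def ExpIsPAXp (m : ℕ) (X : Finset (Fin (2 * m + 1))) : Prop :=
  ExpIsWeakPAXp m X ∧ ∀ Y ⊂ X, ¬ ExpIsWeakPAXp m Y

/-!
Since the threshold is `δ = 1`, `X` is a weak PAXp iff every point agreeing with `v` on `X`
is classified `True`. Agreeing with `v` forces a `1` at each feature of `X ∩ {1,…,2m}`, and
the point that is `0` everywhere else attains exactly these ones, so the worst case has
`|X ∩ {1,…,2m}|` ones.
-/

theorem one_le_card_filter_div_card_iff {α K : Type*} [Field K] [LinearOrder K]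
    [IsStrictOrderedRing K] {s : Finset α} {p : α → Prop} [DecidablePred p]
    (hs : s.Nonempty) : 1 ≤ (#(s.filter p) : K) / #s ↔ ∀ x ∈ s, p x := by
  rw [one_le_div (by exact_mod_cast hs.card_pos), Nat.cast_le,
    (card_filter_le s p).ge_iff_eq, card_filter_eq_iff]

theorem expIsWeakPAXp_iff_forall (m : ℕ) (X : Finset (Fin (2 * m + 1))) :
    ExpIsWeakPAXp m X ↔
      ∀ x : ExpF m, (∀ i ∈ X, x.1 i = (expv m).1 i) → expκ m x = true := by
  unfold ExpIsWeakPAXp expProp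
  rw [← filter_filter, one_le_card_filter_div_card_iff ⟨expv m, by simp⟩]
  simp

abbrev expOnes (m : ℕ) (x : ExpF m) : Finset (Fin (2 * m + 1)) :=
  univ.filter (fun i : Fin (2 * m + 1) => (i : ℕ) < 2 * m ∧ x.1 i = 1)

theorem expκ_eq_true_iff (m : ℕ) (x : ExpF m) : expκ m x = true ↔ m ≤ #(expOnes m x) :=
  decide_eq_true_iff

theorem filter_lt_subset_expOnes {m : ℕ} {X : Finset (Fin (2 * m + 1))} {x : ExpF m}
    (hx : ∀ i ∈ X, x.1 i = (expv m).1 i) :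
    X.filter (fun i : Fin (2 * m + 1) => (i : ℕ) < 2 * m) ⊆ expOnes m x := by
  intro i hi
  rw [mem_filter] at hi
  simp [hx i hi.1, expv, hi.2]

def expLeastCompletion (m : ℕ) (X : Finset (Fin (2 * m + 1))) : ExpF m :=
  ⟨fun i => if (i : ℕ) < 2 * m ∧ i ∈ X then 1 else 0,
    fun i _ => by dsimp only; split <;> decide⟩

theorem expLeastCompletion_agrees (m : ℕ) (X : Finset (Fin (2 * m + 1))) :
    ∀ i ∈ X, (expLeastCompletion m X).1 i = (expv m).1 i := by
  intro i hi
  simp [expLeastCompletion, expv, hi]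

theorem expOnes_expLeastCompletion (m : ℕ) (X : Finset (Fin (2 * m + 1))) :
    expOnes m (expLeastCompletion m X) =
      X.filter (fun i : Fin (2 * m + 1) => (i : ℕ) < 2 * m) := by
  ext i
  simp only [mem_filter, mem_univ, true_and, expLeastCompletion]
  split_ifs with hi <;> grind

theorem expIsWeakPAXp_iff_general (m : ℕ) (X : Finset (Fin (2 * m + 1))) :
    ExpIsWeakPAXp m X ↔
      m ≤ (X.filter (fun i : Fin (2 * m + 1) => (i : ℕ) < 2 * m)).card := by
  rw [expIsWeakPAXp_iff_forall]
  constructor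
  · intro h
    have hleast := h _ (expLeastCompletion_agrees m X)
    rwa [expκ_eq_true_iff, expOnes_expLeastCompletion] at hleast
  · intro h x hx
    rw [expκ_eq_true_iff]
    exact h.trans (card_le_card (filter_lt_subset_expOnes hx))

/-- in the exponential example, `X` is a weak PAXp (for `δ = 1`,
class `true`, point `v`) iff `X` contains at least `m` of the first `2m` features. -/
theorem expIsWeakPAXp_iff (m : ℕ) (hm : 1 ≤ m) (X : Finset (Fin (2 * m + 1))) :
    ExpIsWeakPAXp m X ↔
      m ≤ (X.filter (fun i : Fin (2 * m + 1) => (i : ℕ) < 2 * m)).card :=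
  expIsWeakPAXp_iff_general m X
end

section
/- Define the classifier κ on the set of all selections by κ(x) = True iff x is injective, and let v be any injective selection. Then the proportion of selections classified True equals PM(G) / Π_{i∈V₁} |N(i)|, where PM(G) is the number of perfect matchings of G; consequently, for any threshold δ ∈ [0,1], the empty set ∅ of features is a weak PAXp for κ(v) = True iff PM(G) ≥ δ · Π_{i∈V₁} |N(i)|. -/
/-! A perfect matching is exactly the graph of a selection that is a bijection `V₁ → V₂`, and
since `|V₁| = |V₂|` the injective selections are the bijective ones. So the injective selections
are counted by `PM(G)`, while all selections number `∏ i, |N i|`, which is positive. -/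

open Finset

/-- A perfect matching of the bipartite graph with parts `V₁`, `V₂` whose edges
`{i,j}` are given by `j ∈ N i`: a set `M` of edges such that every vertex of
`V₁ ∪ V₂` is incident to exactly one edge of `M`. -/
def IsPerfectMatching {V₁ V₂ : Type*} (N : V₁ → Finset V₂) (M : Finset (V₁ × V₂)) : Prop :=
  (∀ e ∈ M, e.2 ∈ N e.1) ∧
  (∀ i : V₁, ∃! e, e ∈ M ∧ e.1 = i) ∧
  (∀ j : V₂, ∃! e, e ∈ M ∧ e.2 = j)

section

variable {V₁ V₂ : Type*} [Fintype V₁]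

def funGraph (x : V₁ → V₂) : Finset (V₁ × V₂) :=
  univ.map ⟨fun i => (i, x i), fun _ _ h => congrArg Prod.fst h⟩

theorem mem_funGraph {x : V₁ → V₂} {e : V₁ × V₂} : e ∈ funGraph x ↔ x e.1 = e.2 := by
  constructor
  · intro h
    obtain ⟨i, -, rfl⟩ := mem_map.1 h
    rfl
  · intro h
    exact mem_map.2 ⟨e.1, mem_univ _, Prod.ext rfl h⟩

theorem funGraph_injective : Function.Injective (funGraph : (V₁ → V₂) → Finset (V₁ × V₂)) := by
  intro x y hxy
  funext i
  exact (mem_funGraph.1 (hxy ▸ mem_funGraph.2 rfl : (i, x i) ∈ funGraph y)).symm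

theorem forall_mem_funGraph {x : V₁ → V₂} {P : V₁ × V₂ → Prop} :
    (∀ e ∈ funGraph x, P e) ↔ ∀ i, P (i, x i) := by
  refine ⟨fun h i => h _ (mem_funGraph.2 rfl), fun h ⟨i, j⟩ he => ?_⟩
  obtain rfl : x i = j := mem_funGraph.1 he
  exact h i

theorem existsUnique_mem_funGraph {x : V₁ → V₂} {P : V₁ × V₂ → Prop} :
    (∃! e, e ∈ funGraph x ∧ P e) ↔ ∃! i, P (i, x i) := by
  constructor
  · rintro ⟨⟨i, j⟩, ⟨he, hP⟩, hu⟩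
    obtain rfl : x i = j := mem_funGraph.1 he
    exact ⟨i, hP, fun i' hi' => congrArg Prod.fst (hu _ ⟨mem_funGraph.2 rfl, hi'⟩)⟩
  · rintro ⟨i, hP, hu⟩
    refine ⟨(i, x i), ⟨mem_funGraph.2 rfl, hP⟩, fun ⟨i', j⟩ ⟨he, hP'⟩ => ?_⟩
    obtain rfl : x i' = j := mem_funGraph.1 he
    rw [hu i' hP']

theorem isPerfectMatching_funGraph_iff {N : V₁ → Finset V₂} {x : V₁ → V₂} :
    IsPerfectMatching N (funGraph x) ↔ (∀ i, x i ∈ N i) ∧ Function.Bijective x := by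
  simp only [IsPerfectMatching, forall_mem_funGraph, existsUnique_mem_funGraph, existsUnique_eq,
    implies_true, true_and, Function.bijective_iff_existsUnique]

theorem exists_eq_funGraph_of_existsUnique {M : Finset (V₁ × V₂)}
    (hM : ∀ i, ∃! e, e ∈ M ∧ e.1 = i) : ∃ x : V₁ → V₂, M = funGraph x := by
  choose g hg hu using hM
  refine ⟨fun i => (g i).2, ?_⟩
  ext e
  rw [mem_funGraph]
  constructor
  · intro he
    exact congrArg Prod.snd (hu e.1 e ⟨he, rfl⟩).symm
  · intro he
    have : e = g e.1 := Prod.ext (hg e.1).2.symm he.symm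
    exact this ▸ (hg e.1).1

theorem card_selections (N : V₁ → Finset V₂) :
    Nat.card {y : V₁ → V₂ // ∀ i, y i ∈ N i} = ∏ i, (N i).card := by
  rw [Nat.card_congr Equiv.subtypePiEquivPi, Nat.card_pi]
  simp

theorem card_injective_selections_eq_card_isPerfectMatching [Fintype V₂]
    (hcard : Fintype.card V₁ = Fintype.card V₂) (N : V₁ → Finset V₂) :
    Nat.card {x : {y : V₁ → V₂ // ∀ i, y i ∈ N i} // Function.Injective x.1} =
      Nat.card {M : Finset (V₁ × V₂) // IsPerfectMatching N M} := by
  have hbij (x : V₁ → V₂) (hx : Function.Injective x) : Function.Bijective x :=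
    (Fintype.bijective_iff_injective_and_card x).2 ⟨hx, hcard⟩
  refine Nat.card_congr (Equiv.ofBijective
    (fun x => ⟨funGraph x.1.1, isPerfectMatching_funGraph_iff.2 ⟨x.1.2, hbij _ x.2⟩⟩) ⟨?_, ?_⟩)
  · intro x y h
    exact Subtype.ext (Subtype.ext (funGraph_injective (congrArg Subtype.val h)))
  · rintro ⟨M, hM⟩
    obtain ⟨x, rfl⟩ := exists_eq_funGraph_of_existsUnique hM.2.1
    obtain ⟨hsel, hx⟩ := isPerfectMatching_funGraph_iff.1 hM
    exact ⟨⟨⟨x, hsel⟩, hx.1⟩, rfl⟩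

end

theorem empty_set_weakPAXp_iff_perfect_matchings_general
    {V₁ V₂ : Type*} [Fintype V₁] [Fintype V₂]
    (hcard : Fintype.card V₁ = Fintype.card V₂)
    (N : V₁ → Finset V₂) (hN : ∀ i, (N i).Nonempty)
    (δ : ℝ) :
    ((Nat.card {x : {y : V₁ → V₂ // ∀ i, y i ∈ N i} // Function.Injective x.1} : ℝ) /
        (Nat.card {y : V₁ → V₂ // ∀ i, y i ∈ N i} : ℝ) =
      (Nat.card {M : Finset (V₁ × V₂) // IsPerfectMatching N M} : ℝ) /
        ∏ i : V₁, ((N i).card : ℝ)) ∧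
    (δ ≤ (Nat.card {x : {y : V₁ → V₂ // ∀ i, y i ∈ N i} // Function.Injective x.1} : ℝ) /
        (Nat.card {y : V₁ → V₂ // ∀ i, y i ∈ N i} : ℝ) ↔
      δ * ∏ i : V₁, ((N i).card : ℝ) ≤
        (Nat.card {M : Finset (V₁ × V₂) // IsPerfectMatching N M} : ℝ)) := by
  have hprod : (0 : ℝ) < ∏ i : V₁, ((N i).card : ℝ) :=
    prod_pos fun i _ => Nat.cast_pos.2 (hN i).card_pos
  rw [card_injective_selections_eq_card_isPerfectMatching hcard, card_selections, Nat.cast_prod]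
  exact ⟨rfl, le_div_iff₀ hprod⟩

/-- with the feature space consisting of all selections
(`x : V₁ → V₂` with `x i ∈ N i` for every `i`), the classifier `κ(x) = True iff x is
injective`, and `v` an injective selection, the proportion of selections classified
`True` (which is `Prop(∅)`) equals `PM(G) / Π_i |N(i)|`; consequently, for any
threshold `δ ∈ [0,1]`, the empty feature set is a weak PAXp for `κ(v) = True`
iff `PM(G) ≥ δ · Π_i |N(i)|`. -/
theorem empty_set_weakPAXp_iff_perfect_matchings
    {V₁ V₂ : Type*} [Fintype V₁] [Fintype V₂] [DecidableEq V₁] [DecidableEq V₂]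
    (hcard : Fintype.card V₁ = Fintype.card V₂)
    (N : V₁ → Finset V₂) (hN : ∀ i, (N i).Nonempty)
    (v : V₁ → V₂) (hvsel : ∀ i, v i ∈ N i) (hvinj : Function.Injective v)
    (δ : ℝ) (hδ0 : 0 ≤ δ) (hδ1 : δ ≤ 1) :
    ((Nat.card {x : {y : V₁ → V₂ // ∀ i, y i ∈ N i} // Function.Injective x.1} : ℝ) /
        (Nat.card {y : V₁ → V₂ // ∀ i, y i ∈ N i} : ℝ) =
      (Nat.card {M : Finset (V₁ × V₂) // IsPerfectMatching N M} : ℝ) /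
        ∏ i : V₁, ((N i).card : ℝ)) ∧
    (δ ≤ (Nat.card {x : {y : V₁ → V₂ // ∀ i, y i ∈ N i} // Function.Injective x.1} : ℝ) /
        (Nat.card {y : V₁ → V₂ // ∀ i, y i ∈ N i} : ℝ) ↔
      δ * ∏ i : V₁, ((N i).card : ℝ) ≤
        (Nat.card {M : Finset (V₁ × V₂) // IsPerfectMatching N M} : ℝ)) :=
  empty_set_weakPAXp_iff_perfect_matchings_general hcard N hN δ
end
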